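/- arXiv:1904.00732 — 6 statements merged into one kernel-verified Lean document; each statement's English description precedes it below -/
import Mathlib

section
/- Let t, d be real numbers with d > 0 and t ≥ 2√d, and set φ₊ = (t + √(t² − 4d))/2 and φ₋ = (t − √(t² − 4d))/2. Let a : ℕ → ℝ satisfy a (n+1) = t − d / (a n) with a 0 > φ₋. Then a converges to φ₊. -/
open Filter Topology

private lemma stmt8_fixedpt (t d L : ℝ) (a : ℕ → ℝ)
    (hrec : ∀ n : ℕ, a (n + 1) = t - d / a n)
    (hL : Tendsto a atTop (𝓝 L)) (hL0 : L ≠ 0) :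
    L = t - d / L := by
  have h1 : Tendsto (fun n => a (n + 1)) atTop (𝓝 L) :=
    hL.comp (tendsto_add_atTop_nat 1)
  have h2 : Tendsto (fun n => t - d / a n) atTop (𝓝 (t - d / L)) :=
    tendsto_const_nhds.sub (tendsto_const_nhds.div hL hL0)
  exact tendsto_nhds_unique (by simpa [hrec] using h1) h2

/-- Theorem (Convergence, d > 0): if `d > 0`, `t ≥ 2√d`,
`φ₊ = (t + √(t² - 4d))/2`, `φ₋ = (t - √(t² - 4d))/2`, `a (n+1) = t - d / a n`
and `a 0 > φ₋`, then `a` converges to `φ₊`. -/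
theorem stmt8 (t d : ℝ) (hd : 0 < d) (ht : 2 * Real.sqrt d ≤ t)
    (φp φm : ℝ)
    (hφp : φp = (t + Real.sqrt (t ^ 2 - 4 * d)) / 2)
    (hφm : φm = (t - Real.sqrt (t ^ 2 - 4 * d)) / 2)
    (a : ℕ → ℝ)
    (hrec : ∀ n : ℕ, a (n + 1) = t - d / a n)
    (h0 : φm < a 0) :
    Tendsto a atTop (𝓝 φp) := by
  have hs0 : 0 ≤ t ^ 2 - 4 * d := by
    nlinarith [Real.sq_sqrt hd.le, Real.sqrt_nonneg d]
  set s := Real.sqrt (t ^ 2 - 4 * d) with hs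
  have hssq : s ^ 2 = t ^ 2 - 4 * d := Real.sq_sqrt hs0
  have hsnn : 0 ≤ s := Real.sqrt_nonneg _
  have htpos : 0 < t := lt_of_lt_of_le (by positivity) ht
  have hst : s < t := by nlinarith
  have hmpos : 0 < φm := by rw [hφm]; linarith
  have hple : φm ≤ φp := by rw [hφp, hφm]; linarith
  have hppos : 0 < φp := lt_of_lt_of_le hmpos hple
  have hsum : φp + φm = t := by rw [hφp, hφm]; ring
  have hprod : φp * φm = d := by
    rw [hφp, hφm]; linear_combination (-1/4 : ℝ) * hssq
  have hfac : ∀ x : ℝ, (x - φp) * (x - φm) = x ^ 2 - t * x + d := by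
    intro x
    linear_combination (-x) * hsum + hprod
  rcases le_total (a 0) φp with hc | hc
  · -- increasing case: φm < a n ≤ φp
    have key : ∀ n, φm < a n ∧ a n ≤ φp := by
      intro n
      induction n with
      | zero => exact ⟨h0, hc⟩
      | succ n ih =>
        obtain ⟨h1, h2⟩ := ih
        have hpos : 0 < a n := lt_trans hmpos h1
        constructor
        · rw [hrec n]
          have hdiv : d / a n < φp := by
            rw [div_lt_iff₀ hpos]
            calc d = φp * φm := hprod.symm
            _ < φp * a n := by exact mul_lt_mul_of_pos_left h1 hppos
          linarith
        · rw [hrec n]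
          have hdiv : φm ≤ d / a n := by
            rw [le_div_iff₀ hpos]
            calc φm * a n ≤ φm * φp := mul_le_mul_of_nonneg_left h2 hmpos.le
            _ = d := by rw [mul_comm]; exact hprod
          linarith
    have hmono : Monotone a := by
      apply monotone_nat_of_le_succ
      intro n
      obtain ⟨h1, h2⟩ := key n
      have hpos : 0 < a n := lt_trans hmpos h1
      rw [hrec n]
      have hq : (a n - φp) * (a n - φm) ≤ 0 :=
        mul_nonpos_of_nonpos_of_nonneg (by linarith) (by linarith)
      rw [hfac] at hq
      have : d / a n ≤ t - a n := by
        rw [div_le_iff₀ hpos]; nlinarith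
      linarith
    have hbdd : BddAbove (Set.range a) := ⟨φp, by rintro x ⟨n, rfl⟩; exact (key n).2⟩
    have hL : Tendsto a atTop (𝓝 (⨆ n, a n)) := tendsto_atTop_ciSup hmono hbdd
    set L := ⨆ n, a n with hLdef
    have hLlb : φm < L := lt_of_lt_of_le h0 (le_ciSup hbdd 0)
    have hL0 : L ≠ 0 := ne_of_gt (lt_trans hmpos hLlb)
    have hLfix : L = t - d / L := stmt8_fixedpt t d L a hrec hL hL0
    have hzero : (L - φp) * (L - φm) = 0 := by
      rw [hfac]
      have : L * L = t * L - d := by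
        field_simp at hLfix
        linarith [hLfix]
      nlinarith [this]
    have : L = φp := by
      rcases mul_eq_zero.mp hzero with h | h
      · linarith
      · exfalso; linarith
    rwa [this] at hL
  · -- decreasing case: φp ≤ a n
    have key : ∀ n, φp ≤ a n := by
      intro n
      induction n with
      | zero => exact hc
      | succ n ih =>
        have hpos : 0 < a n := lt_of_lt_of_le hppos ih
        rw [hrec n]
        have hdiv : d / a n ≤ φm := by
          rw [div_le_iff₀ hpos]
          calc d = φm * φp := by rw [mul_comm]; exact hprod.symm
          _ ≤ φm * a n := mul_le_mul_of_nonneg_left ih hmpos.le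
        linarith
    have hanti : Antitone a := by
      apply antitone_nat_of_succ_le
      intro n
      have h1 := key n
      have hpos : 0 < a n := lt_of_lt_of_le hppos h1
      rw [hrec n]
      have hq : 0 ≤ (a n - φp) * (a n - φm) :=
        mul_nonneg (by linarith) (by linarith)
      rw [hfac] at hq
      have : t - a n ≤ d / a n := by
        rw [le_div_iff₀ hpos]; nlinarith
      linarith
    have hbdd : BddBelow (Set.range a) := ⟨φp, by rintro x ⟨n, rfl⟩; exact key n⟩
    have hL : Tendsto a atTop (𝓝 (⨅ n, a n)) := tendsto_atTop_ciInf hanti hbdd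
    set L := ⨅ n, a n with hLdef
    have hLlb : φp ≤ L := le_ciInf key
    have hL0 : L ≠ 0 := by have := hppos; intro h; rw [h] at hLlb; linarith
    have hLfix : L = t - d / L := stmt8_fixedpt t d L a hrec hL hL0
    have hzero : (L - φp) * (L - φm) = 0 := by
      rw [hfac]
      have : L * L = t * L - d := by
        field_simp at hLfix
        linarith [hLfix]
      nlinarith [this]
    have : L = φp := by
      rcases mul_eq_zero.mp hzero with h | h
      · linarith
      · linarith
    rwa [this] at hL
end

section
/- Let t, d be real numbers with d < 0 and t > 0, and set φ₊ = (t + √(t² − 4d))/2. Let a : ℕ → ℝ satisfy a (n+1) = t − d / (a n) with a 0 ≥ φ₊. Then the even-indexed subsequence (a (2k)) is monotone decreasing and converges to φ₊, and the odd-indexed subsequence (a (2k+1)) is monotone increasing and converges to φ₊. -/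
open Filter Topology

/-- Theorem (Convergence, d < 0, case (i)): if `d < 0`, `t > 0`,
`φ₊ = (t + √(t² - 4d))/2`, `a (n+1) = t - d / a n` and `a 0 ≥ φ₊`, then the
even-indexed subsequence is monotone decreasing converging to `φ₊`, and the
odd-indexed subsequence is monotone increasing converging to `φ₊`. -/
theorem stmt9 (t d : ℝ) (hd : d < 0) (ht : 0 < t)
    (φ : ℝ) (hφ : φ = (t + Real.sqrt (t ^ 2 - 4 * d)) / 2)
    (a : ℕ → ℝ)
    (hrec : ∀ n : ℕ, a (n + 1) = t - d / a n)
    (h0 : φ ≤ a 0) :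
    Antitone (fun k : ℕ => a (2 * k)) ∧
    Tendsto (fun k : ℕ => a (2 * k)) atTop (𝓝 φ) ∧
    Monotone (fun k : ℕ => a (2 * k + 1)) ∧
    Tendsto (fun k : ℕ => a (2 * k + 1)) atTop (𝓝 φ) := by
  have hdisc : (0:ℝ) < t ^ 2 - 4 * d := by nlinarith
  set s := Real.sqrt (t ^ 2 - 4 * d) with hs
  have hssq : s ^ 2 = t ^ 2 - 4 * d := Real.sq_sqrt hdisc.le
  have hs0 : 0 ≤ s := Real.sqrt_nonneg _
  have hst : t < s := by nlinarith
  have hφt : t < φ := by rw [hφ]; linarith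
  have hφ0 : 0 < φ := lt_trans ht hφt
  have hfix : φ ^ 2 - t * φ + d = 0 := by rw [hφ]; nlinarith [hssq]
  -- step A : x ≥ φ → f x ∈ (0, φ]
  have stepA : ∀ x : ℝ, φ ≤ x → 0 < t - d / x ∧ t - d / x ≤ φ := by
    intro x hx
    have hx0 : 0 < x := lt_of_lt_of_le hφ0 hx
    have hdx : d / x * x = d := div_mul_cancel₀ d hx0.ne'
    constructor
    · have : d / x < 0 := div_neg_of_neg_of_pos hd hx0
      linarith
    · nlinarith [hdx, hfix, hx, hφt]
  -- step B : 0 < x ≤ φ → f x ≥ φ (and f x > t)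
  have stepB : ∀ x : ℝ, 0 < x → x ≤ φ → φ ≤ t - d / x := by
    intro x hx0 hx
    have hdx : d / x * x = d := div_mul_cancel₀ d hx0.ne'
    nlinarith [hdx, hfix, hx, hφt]
  -- invariant
  have inv : ∀ k : ℕ, φ ≤ a (2 * k) := by
    intro k
    induction k with
    | zero => simpa using h0
    | succ n ih =>
      have h1 := stepA _ ih
      rw [← hrec (2 * n)] at h1
      have e : 2 * (n + 1) = 2 * n + 1 + 1 := by ring
      rw [e, hrec (2 * n + 1)]
      exact stepB _ h1.1 h1.2
  have oddb : ∀ k : ℕ, 0 < a (2 * k + 1) ∧ a (2 * k + 1) ≤ φ := by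
    intro k
    have h1 := stepA _ (inv k)
    rw [← hrec (2 * k)] at h1
    exact h1
  have apos : ∀ n : ℕ, 0 < a n := by
    intro n
    rcases Nat.even_or_odd n with ⟨m, hm⟩ | ⟨m, hm⟩
    · have := inv m; rw [hm]; have : φ ≤ a (2 * m) := inv m
      calc (0:ℝ) < φ := hφ0
        _ ≤ a (m + m) := by rw [two_mul] at this; exact this
    · rw [hm]; exact (oddb m).1
  -- product identities:  a(n+1) * a n = t * a n - d
  have prod : ∀ n : ℕ, a (n + 1) * a n = t * a n - d := by
    intro n
    rw [hrec n]
    field_simp [(apos n).ne']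
  -- antitone even
  have hanti : Antitone fun k : ℕ => a (2 * k) := by
    apply antitone_nat_of_succ_le
    intro n
    have hx := inv n
    have hy := oddb n
    have e : 2 * (n + 1) = 2 * n + 1 + 1 := by ring
    have p1 := prod (2 * n)          -- a(2n+1)*a(2n) = t*a(2n) - d
    have p2 := prod (2 * n + 1)      -- a(2n+2)*a(2n+1) = t*a(2n+1) - d
    simp only [e]
    nlinarith [p1, p2, hy.1, hy.2, hx, mul_nonneg (sub_nonneg.mpr (le_trans hy.2 hx)) ht.le]
  -- monotone odd
  have hmono : Monotone fun k : ℕ => a (2 * k + 1) := by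
    apply monotone_nat_of_le_succ
    intro n
    have hy := oddb n
    have hv : φ ≤ a (2 * n + 1 + 1) := by
      rw [hrec (2 * n + 1)]; exact stepB _ hy.1 hy.2
    have e : 2 * (n + 1) + 1 = 2 * n + 1 + 1 + 1 := by ring
    have p1 := prod (2 * n + 1)          -- a(2n+2)*a(2n+1) = t*a(2n+1) - d
    have p2 := prod (2 * n + 1 + 1)      -- a(2n+3)*a(2n+2) = t*a(2n+2) - d
    simp only [e]
    have hyv : a (2 * n + 1) ≤ a (2 * n + 1 + 1) := le_trans hy.2 hv
    nlinarith [p1, p2, hy.1, lt_of_lt_of_le hφ0 hv,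
      mul_nonneg (sub_nonneg.mpr hyv) ht.le]
  -- convergence of the even subsequence
  have hbdd : BddBelow (Set.range fun k : ℕ => a (2 * k)) := by
    refine ⟨φ, ?_⟩
    rintro y ⟨k, rfl⟩
    exact inv k
  obtain ⟨L, hL, hLφ⟩ : ∃ L : ℝ, Tendsto (fun k : ℕ => a (2 * k)) atTop (𝓝 L) ∧ φ ≤ L :=
    ⟨⨅ k : ℕ, a (2 * k), tendsto_atTop_ciInf hanti hbdd, le_ciInf inv⟩
  have hL0 : L ≠ 0 := (lt_of_lt_of_le hφ0 hLφ).ne'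
  set M : ℝ := t - d / L with hMdef
  have hM0 : 0 < M := by
    have : d / L < 0 := div_neg_of_neg_of_pos hd (lt_of_lt_of_le hφ0 hLφ)
    rw [hMdef]; linarith
  have hModd : Tendsto (fun k : ℕ => a (2 * k + 1)) atTop (𝓝 M) := by
    have h1 : Tendsto (fun k : ℕ => t - d / a (2 * k)) atTop (𝓝 (t - d / L)) :=
      tendsto_const_nhds.sub (tendsto_const_nhds.div hL hL0)
    exact h1.congr fun k => (hrec (2 * k)).symm
  have hLshift : Tendsto (fun k : ℕ => a (2 * (k + 1))) atTop (𝓝 L) :=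
    hL.comp (tendsto_add_atTop_nat 1)
  have hLshift' : Tendsto (fun k : ℕ => a (2 * (k + 1))) atTop (𝓝 (t - d / M)) := by
    have h1 : Tendsto (fun k : ℕ => t - d / a (2 * k + 1)) atTop (𝓝 (t - d / M)) :=
      tendsto_const_nhds.sub (tendsto_const_nhds.div hModd hM0.ne')
    refine h1.congr fun k => ?_
    have e : 2 * (k + 1) = 2 * k + 1 + 1 := by ring
    rw [e, hrec (2 * k + 1)]
  have hLM : L = t - d / M := tendsto_nhds_unique hLshift hLshift'
  -- From L = t - d/M and M = t - d/L deduce L = M and then L = φ.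
  have e1 : L * M = t * M - d := by
    rw [hLM]; field_simp
  have e2 : M * L = t * L - d := by
    rw [hMdef]; field_simp
  have hLeqM : L = M := by
    have : t * M = t * L := by nlinarith [e1, e2]
    exact (mul_left_cancel₀ ht.ne' this).symm
  have hLquad : L ^ 2 - t * L + d = 0 := by
    have := e2
    rw [← hLeqM] at this
    nlinarith [this]
  have hLφ' : L = φ := by
    have hfac : (L - φ) * (L + φ - t) = 0 := by linear_combination hLquad - hfix
    have hpos : 0 < L + φ - t := by linarith
    have := mul_eq_zero.mp hfac
    rcases this with h | h
    · linarith
    · linarith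
  refine ⟨hanti, ?_, hmono, ?_⟩
  · rwa [hLφ'] at hL
  · have hMφ : M = φ := by
      rw [hMdef, hLφ']
      field_simp
      linear_combination -hfix
    rwa [hMφ] at hModd
end

section
/- Let t, d be real numbers with d < 0 and t > 0, and set φ₊ = (t + √(t² − 4d))/2. Let a : ℕ → ℝ satisfy a (n+1) = t − d / (a n) with 0 < a 0 ≤ φ₊. Then the even-indexed subsequence (a (2k)) is monotone increasing and converges to φ₊, and the odd-indexed subsequence (a (2k+1)) is monotone decreasing and converges to φ₊. -/
open Filter Topology

/-- Theorem (Convergence, d < 0, case (ii)): if `d < 0`, `t > 0`,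
`φ₊ = (t + √(t² - 4d))/2`, `a (n+1) = t - d / a n` and `0 < a 0 ≤ φ₊`, then the
even-indexed subsequence is monotone increasing converging to `φ₊`, and the
odd-indexed subsequence is monotone decreasing converging to `φ₊`. -/
theorem stmt10 (t d : ℝ) (hd : d < 0) (ht : 0 < t)
    (φ : ℝ) (hφ : φ = (t + Real.sqrt (t ^ 2 - 4 * d)) / 2)
    (a : ℕ → ℝ)
    (hrec : ∀ n : ℕ, a (n + 1) = t - d / a n)
    (h0 : 0 < a 0) (h0' : a 0 ≤ φ) :
    Monotone (fun k : ℕ => a (2 * k)) ∧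
    Tendsto (fun k : ℕ => a (2 * k)) atTop (𝓝 φ) ∧
    Antitone (fun k : ℕ => a (2 * k + 1)) ∧
    Tendsto (fun k : ℕ => a (2 * k + 1)) atTop (𝓝 φ) := by
  have hs2 : (0:ℝ) < t ^ 2 - 4 * d := by nlinarith
  have hssq : Real.sqrt (t ^ 2 - 4 * d) ^ 2 = t ^ 2 - 4 * d := Real.sq_sqrt hs2.le
  have hsnn : 0 ≤ Real.sqrt (t ^ 2 - 4 * d) := Real.sqrt_nonneg _
  have hst : t < Real.sqrt (t ^ 2 - 4 * d) := by nlinarith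
  have hφt : t < φ := by rw [hφ]; linarith
  have hφ0 : 0 < φ := ht.trans hφt
  have hfixφ : φ ^ 2 = t * φ - d := by rw [hφ]; nlinarith
  have hfp : t - d / φ = φ := by
    field_simp
    nlinarith
  -- f is antitone-ish step lemmas
  have step1 : ∀ x : ℝ, 0 < x → x ≤ φ → φ ≤ t - d / x := by
    intro x hx hxφ
    have h1 : d / x ≤ d / φ := by
      rw [div_le_div_iff₀ hx hφ0]; nlinarith
    linarith
  have step2 : ∀ y : ℝ, φ ≤ y → 0 < t - d / y ∧ t - d / y ≤ φ := by
    intro y hy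
    have hy0 : 0 < y := hφ0.trans_le hy
    have h1 : d / φ ≤ d / y := by
      rw [div_le_div_iff₀ hφ0 hy0]; nlinarith
    have h2 : d / y < 0 := div_neg_of_neg_of_pos hd hy0
    exact ⟨by linarith, by linarith⟩
  have key : ∀ k : ℕ, 0 < a (2 * k) ∧ a (2 * k) ≤ φ ∧ φ ≤ a (2 * k + 1) := by
    intro k
    induction k with
    | zero =>
      refine ⟨by simpa using h0, by simpa using h0', ?_⟩
      have : a 1 = t - d / a 0 := hrec 0
      have := step1 (a 0) h0 h0'
      simpa [hrec 0] using this
    | succ k ih =>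
      obtain ⟨h1, h2, h3⟩ := ih
      have hv := step2 (a (2 * k + 1)) h3
      have e1 : 2 * (k + 1) = 2 * k + 1 + 1 := by ring
      rw [e1]
      refine ⟨?_, ?_, ?_⟩
      · rw [hrec (2 * k + 1)]; exact hv.1
      · rw [hrec (2 * k + 1)]; exact hv.2
      · rw [hrec (2 * k + 1 + 1), hrec (2 * k + 1)]
        exact step1 _ hv.1 hv.2
  -- monotone even
  have hmonoE : Monotone (fun k : ℕ => a (2 * k)) := by
    apply monotone_nat_of_le_succ
    intro k
    obtain ⟨hx, hxφ, hyφ⟩ := key k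
    have hy0 : 0 < a (2 * k + 1) := hφ0.trans_le hyφ
    have hxy : a (2 * k) ≤ a (2 * k + 1) := hxφ.trans hyφ
    have huv : a (2 * k) * a (2 * k + 1) = t * a (2 * k) - d := by
      rw [hrec (2 * k)]
      field_simp
    show a (2 * k) ≤ a (2 * (k + 1))
    rw [show 2 * (k + 1) = (2 * k + 1) + 1 by ring, hrec (2 * k + 1)]
    rw [show a (2 * k) ≤ t - d / a (2 * k + 1) ↔ d / a (2 * k + 1) ≤ t - a (2 * k) by
      constructor <;> intro h <;> linarith, div_le_iff₀ hy0]
    nlinarith [mul_nonneg ht.le (sub_nonneg.2 hxy)]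
  -- antitone odd
  have hantiO : Antitone (fun k : ℕ => a (2 * k + 1)) := by
    apply antitone_nat_of_succ_le
    intro k
    obtain ⟨hx, hxφ, hyφ⟩ := key k
    obtain ⟨hz, hzφ, _⟩ := key (k + 1)
    have hy0 : 0 < a (2 * k + 1) := hφ0.trans_le hyφ
    have hzy : a (2 * (k + 1)) ≤ a (2 * k + 1) := hzφ.trans hyφ
    have hzw : a (2 * (k + 1)) * a (2 * k + 1) = t * a (2 * k + 1) - d := by
      rw [show 2 * (k + 1) = (2 * k + 1) + 1 by ring, hrec (2 * k + 1)]
      field_simp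
    show a (2 * (k + 1) + 1) ≤ a (2 * k + 1)
    rw [show 2 * (k + 1) + 1 = (2 * (k + 1)) + 1 by ring, hrec (2 * (k + 1))]
    rw [show t - d / a (2 * (k + 1)) ≤ a (2 * k + 1) ↔
        t - a (2 * k + 1) ≤ d / a (2 * (k + 1)) by constructor <;> intro h <;> linarith,
      le_div_iff₀ hz]
    nlinarith [mul_nonneg ht.le (sub_nonneg.2 hzy)]
  -- convergence of even subsequence
  have hbddE : BddAbove (Set.range fun k : ℕ => a (2 * k)) := by
    refine ⟨φ, ?_⟩
    rintro x ⟨k, rfl⟩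
    exact (key k).2.1
  have hLt : Tendsto (fun k : ℕ => a (2 * k)) atTop (𝓝 (⨆ k : ℕ, a (2 * k))) :=
    tendsto_atTop_ciSup hmonoE hbddE
  obtain ⟨L, hLt⟩ : ∃ L, Tendsto (fun k : ℕ => a (2 * k)) atTop (𝓝 L) := ⟨_, hLt⟩
  have hL0 : 0 < L := by
    have h1 : a (2 * 0) ≤ L := hmonoE.ge_of_tendsto hLt 0
    simp only [Nat.mul_zero] at h1
    linarith
  have hden : 0 < t - d / L := by
    have : d / L < 0 := div_neg_of_neg_of_pos hd hL0
    linarith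
  -- limit of shifted even subsequence equals f(f(L))
  have hshift : Tendsto (fun k : ℕ => a (2 * (k + 1))) atTop (𝓝 L) := by
    have := hLt.comp (tendsto_add_atTop_nat 1)
    exact this
  have hcomp : Tendsto (fun k : ℕ => t - d / (t - d / a (2 * k))) atTop
      (𝓝 (t - d / (t - d / L))) := by
    have h2 : Tendsto (fun k : ℕ => t - d / a (2 * k)) atTop (𝓝 (t - d / L)) :=
      tendsto_const_nhds.sub (tendsto_const_nhds.div hLt hL0.ne')
    exact tendsto_const_nhds.sub (tendsto_const_nhds.div h2 hden.ne')
  have heqfun : (fun k : ℕ => a (2 * (k + 1))) =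
      fun k : ℕ => t - d / (t - d / a (2 * k)) := by
    funext k
    rw [show 2 * (k + 1) = (2 * k + 1) + 1 by ring, hrec (2 * k + 1), hrec (2 * k)]
  rw [heqfun] at hshift
  have hfix : t - d / (t - d / L) = L := tendsto_nhds_unique hcomp hshift
  -- deduce L = φ
  have hLφ : L = φ := by
    have hTLd : (0:ℝ) < t * L - d := by nlinarith [mul_pos ht hL0]
    have h := hfix
    field_simp [hTLd.ne'] at h
    have h3 : t * (t * L - d) = t * (L ^ 2) := by linear_combination h
    have h4 := mul_left_cancel₀ ht.ne' h3
    have hquad : L ^ 2 = t * L - d := by linarith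
    have hz : (L - φ) * (L + φ - t) = 0 := by nlinarith [hquad, hfixφ]
    rcases mul_eq_zero.1 hz with h | h
    · linarith
    · linarith
  rw [hLφ] at hLt
  -- odd subsequence limit
  have hoddfun : (fun k : ℕ => a (2 * k + 1)) = fun k : ℕ => t - d / a (2 * k) := by
    funext k
    rw [hrec (2 * k)]
  have hOt : Tendsto (fun k : ℕ => a (2 * k + 1)) atTop (𝓝 φ) := by
    rw [hoddfun]
    have : Tendsto (fun k : ℕ => t - d / a (2 * k)) atTop (𝓝 (t - d / φ)) :=
      tendsto_const_nhds.sub (tendsto_const_nhds.div hLt hφ0.ne')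
    rwa [hfp] at this
  exact ⟨hmonoE, hLt, hantiO, hOt⟩
end

section
/- Let t, d be real numbers with d < 0 and t > 0, and set φ₊ = (t + √(t² − 4d))/2. Let a : ℕ → ℝ satisfy a (n+1) = t − d / (a n) with a 0 > 0. Then a converges to φ₊. -/
open Filter Topology

/-- Theorem (Convergence, d < 0): if `d < 0`, `t > 0`,
`φ₊ = (t + √(t² - 4d))/2`, `a (n+1) = t - d / a n` and `a 0 > 0`, then `a`
converges to `φ₊`. -/
theorem stmt11 (t d : ℝ) (hd : d < 0) (ht : 0 < t)
    (φ : ℝ) (hφ : φ = (t + Real.sqrt (t ^ 2 - 4 * d)) / 2)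
    (a : ℕ → ℝ)
    (hrec : ∀ n : ℕ, a (n + 1) = t - d / a n)
    (h0 : 0 < a 0) :
    Tendsto a atTop (𝓝 φ) := by
  set s := Real.sqrt (t ^ 2 - 4 * d) with hsdef
  have hpos : (0:ℝ) < t ^ 2 - 4 * d := by nlinarith
  have hs2 : s ^ 2 = t ^ 2 - 4 * d := Real.sq_sqrt hpos.le
  have hsnn : 0 ≤ s := Real.sqrt_nonneg _
  have hst : t < s := by nlinarith
  set ψ := (t - s) / 2 with hψ
  have hψneg : ψ < 0 := by rw [hψ]; linarith
  have hφpos : 0 < φ := by rw [hφ]; linarith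
  have hψφ : ψ < φ := by linarith
  have hsum : φ + ψ = t := by rw [hφ, hψ]; ring
  have hprod : φ * ψ = d := by rw [hφ, hψ]; nlinarith [hs2]
  have hapos : ∀ n, 0 < a n := by
    intro n
    induction n with
    | zero => exact h0
    | succ n ih =>
      rw [hrec n]
      have : d / a n < 0 := div_neg_of_neg_of_pos hd ih
      linarith
  have haψ : ∀ n, 0 < a n - ψ := fun n => by linarith [hapos n]
  set b : ℕ → ℝ := fun n => (a n - φ) / (a n - ψ) with hb
  have hstep : ∀ n, b (n + 1) = (ψ / φ) * b n := by
    intro n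
    have h1 : a n ≠ 0 := (hapos n).ne'
    have h2 : a n - ψ ≠ 0 := (haψ n).ne'
    have h3 : a (n + 1) - ψ ≠ 0 := (haψ (n + 1)).ne'
    have hr' : a (n + 1) * a n = (φ + ψ) * a n - φ * ψ := by
      rw [hrec n, hsum, hprod]; field_simp
    have key : (a (n + 1) - φ) * (φ * (a n - ψ)) = ψ * (a n - φ) * (a (n + 1) - ψ) := by
      linear_combination (φ - ψ) * hr'
    simp only [hb]
    rw [div_mul_div_comm, div_eq_div_iff h3 (mul_ne_zero hφpos.ne' h2)]
    linarith [key]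
  have hgeo : ∀ n, b n = (ψ / φ) ^ n * b 0 := by
    intro n
    induction n with
    | zero => simp
    | succ n ih => rw [hstep n, ih, pow_succ]; ring
  have hratio : |ψ / φ| < 1 := by
    rw [abs_lt]
    constructor
    · rw [lt_div_iff₀ hφpos]; nlinarith
    · rw [div_lt_one hφpos]; linarith
  have hb0 : Tendsto b atTop (𝓝 0) := by
    have h1 : Tendsto (fun n : ℕ => (ψ / φ) ^ n * b 0) atTop (𝓝 (0 * b 0)) :=
      (tendsto_pow_atTop_nhds_zero_of_abs_lt_one hratio).mul_const _
    rw [zero_mul] at h1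
    exact h1.congr fun n => (hgeo n).symm
  have hblt : ∀ n, b n < 1 := by
    intro n
    simp only [hb]
    rw [div_lt_one (haψ n)]
    linarith
  have haeq : ∀ n, a n = (φ - ψ * b n) / (1 - b n) := by
    intro n
    have h2 : a n - ψ ≠ 0 := (haψ n).ne'
    have hbn : b n * (a n - ψ) = a n - φ := by
      simp only [hb]; field_simp
    have h1 : (1 : ℝ) - b n ≠ 0 := by have := hblt n; intro h; nlinarith
    field_simp
    nlinarith [hbn]
  have hfinal : Tendsto (fun n => (φ - ψ * b n) / (1 - b n)) atTop
      (𝓝 ((φ - ψ * 0) / (1 - 0))) := by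
    exact Tendsto.div
      (tendsto_const_nhds.sub (tendsto_const_nhds.mul hb0))
      (tendsto_const_nhds.sub hb0) (by norm_num)
  have : ((φ - ψ * 0) / (1 - 0) : ℝ) = φ := by norm_num
  rw [this] at hfinal
  exact hfinal.congr fun n => (haeq n).symm
end

section
/- Let U = [[α, β], [γ, δ]] be a 2×2 matrix with nonnegative integer entries and det U = 1, and let A₀, B₀ be real numbers with A₀ ≥ 1 and B₀ ≥ 1. Define sequences A, B : ℕ → ℝ by (A (n+1), B (n+1))ᵀ = U · (A n, B n)ᵀ starting from (A 0, B 0) = (A₀, B₀). Set t = tr U = α + δ and φ = (t + √(t² − 4))/2. Then A (n+1)/A n → φ and B (n+1)/B n → φ as n → ∞. -/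
open Matrix Filter Topology

private lemma ratio_arith (b c : ℝ) (hb : 0 < b) (hc : 0 ≤ c) :
    Tendsto (fun n : ℕ => (b + ((n:ℝ)+1)*c) / (b + (n:ℝ)*c)) atTop (𝓝 1) := by
  rcases hc.eq_or_lt with h|h
  · simp [← h, hb.ne']
  · have key : ∀ n : ℕ, (b + ((n:ℝ)+1)*c) / (b + (n:ℝ)*c) = 1 + c / (b + (n:ℝ)*c) := by
      intro n
      have hne : b + (n:ℝ)*c ≠ 0 := by positivity
      field_simp
      ring
    simp_rw [key]
    have h0 : Tendsto (fun n : ℕ => c / (b + (n:ℝ)*c)) atTop (𝓝 0) := by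
      apply Tendsto.div_atTop tendsto_const_nhds
      apply tendsto_atTop_add_const_left
      exact tendsto_natCast_atTop_atTop.atTop_mul_const h
    simpa using tendsto_const_nhds.add h0

private lemma binet_ratio (φ ψ P Q : ℝ) (a : ℕ → ℝ)
    (hψ : 0 < ψ) (hψφ : ψ < φ) (hP : P ≠ 0)
    (hane : ∀ n, a n ≠ 0)
    (hcl : ∀ n, a n = P * φ^n + Q * ψ^n) :
    Tendsto (fun n : ℕ => a (n+1) / a n) atTop (𝓝 φ) := by
  have hφ0 : 0 < φ := hψ.trans hψφ
  have hr : |ψ/φ| < 1 := by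
    rw [abs_of_pos (div_pos hψ hφ0)]
    exact (div_lt_one hφ0).2 hψφ
  have h1 : Tendsto (fun n : ℕ => a n / φ^n) atTop (𝓝 P) := by
    have he : ∀ n : ℕ, a n / φ^n = P + Q * (ψ/φ)^n := by
      intro n
      have hpn : φ^n ≠ 0 := pow_ne_zero _ hφ0.ne'
      rw [hcl n, div_pow]
      field_simp
    simp_rw [he]
    simpa using tendsto_const_nhds.add
      ((tendsto_pow_atTop_nhds_zero_of_abs_lt_one hr).const_mul Q)
  have key : ∀ n : ℕ, a (n+1) / a n = (a (n+1)/φ^(n+1)) / (a n / φ^n) * φ := by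
    intro n
    have hpn : φ^n ≠ 0 := pow_ne_zero _ hφ0.ne'
    have hpn1 : φ^(n+1) ≠ 0 := pow_ne_zero _ hφ0.ne'
    field_simp [hane n]
    ring
  simp_rw [key]
  have h2 : Tendsto (fun n : ℕ => a (n+1)/φ^(n+1)) atTop (𝓝 P) :=
    h1.comp (tendsto_add_atTop_nat 1)
  have := (h2.div h1 hP).mul_const φ
  simpa [div_self hP] using this

/-- Corollary (limit of ratios, det = 1 case): if `U = [[α, β], [γ, δ]]` has
nonnegative integer entries and `det U = 1`, `A₀, B₀ ≥ 1`, and the sequences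
`A, B` satisfy the vector recurrence `(A (n+1), B (n+1))ᵀ = U · (A n, B n)ᵀ`,
then with `t = tr U = α + δ` and `φ = (t + √(t² - 4))/2` (the unimodular ratio)
we have `A (n+1)/A n → φ` and `B (n+1)/B n → φ`. -/
theorem stmt12 (α β γ δ : ℕ) (U : Matrix (Fin 2) (Fin 2) ℝ)
    (hU : U = !![(α : ℝ), (β : ℝ); (γ : ℝ), (δ : ℝ)])
    (hdet : U.det = 1)
    (A₀ B₀ : ℝ) (hA₀ : 1 ≤ A₀) (hB₀ : 1 ≤ B₀)
    (A B : ℕ → ℝ) (hA0 : A 0 = A₀) (hB0 : B 0 = B₀)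
    (hrec : ∀ n : ℕ, ![A (n + 1), B (n + 1)] = U.mulVec ![A n, B n])
    (t φ : ℝ) (ht : t = (α : ℝ) + (δ : ℝ))
    (hφ : φ = (t + Real.sqrt (t ^ 2 - 4)) / 2) :
    Tendsto (fun n : ℕ => A (n + 1) / A n) atTop (𝓝 φ) ∧
    Tendsto (fun n : ℕ => B (n + 1) / B n) atTop (𝓝 φ) := by
  have hdetR : (α:ℝ)*δ - β*γ = 1 := by rw [hU] at hdet; simpa [Matrix.det_fin_two_of] using hdet
  have hA : ∀ n, A (n+1) = α * A n + β * B n := by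
    intro n
    have := congrFun (hrec n) 0
    simpa [hU, Matrix.mulVec, dotProduct, Fin.sum_univ_two] using this
  have hB : ∀ n, B (n+1) = γ * A n + δ * B n := by
    intro n
    have := congrFun (hrec n) 1
    simpa [hU, Matrix.mulVec, dotProduct, Fin.sum_univ_two] using this
  have hnat : α * δ = 1 + β * γ := by
    have : ((α*δ : ℕ) : ℝ) = ((1 + β*γ : ℕ) : ℝ) := by push_cast; linarith
    exact_mod_cast this
  have hA₀pos : (0:ℝ) < A₀ := by linarith
  have hB₀pos : (0:ℝ) < B₀ := by linarith
  rcases Nat.eq_zero_or_pos (β*γ) with hbg | hbg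
  · -- degenerate case: β*γ = 0, α = δ = 1, φ = 1
    have h1 : α * δ = 1 := by omega
    have hα1 : α = 1 := Nat.eq_one_of_mul_eq_one_right h1
    have hδ1 : δ = 1 := Nat.eq_one_of_mul_eq_one_left h1
    subst hα1 hδ1
    have hβγR : (β:ℝ) * γ = 0 := by exact_mod_cast hbg
    have hφ1 : φ = 1 := by
      rw [hφ, ht]
      norm_num
    have hform : ∀ n : ℕ, A n = A₀ + (n:ℝ) * ((β:ℝ)*B₀) ∧ B n = B₀ + (n:ℝ) * ((γ:ℝ)*A₀) := by
      intro n
      induction n with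
      | zero => simp [hA0, hB0]
      | succ n ih =>
        constructor
        · rw [hA n, ih.1, ih.2]
          push_cast
          linear_combination ((n:ℝ)*A₀) * hβγR
        · rw [hB n, ih.1, ih.2]
          push_cast
          linear_combination ((n:ℝ)*B₀) * hβγR
    rw [hφ1]
    constructor
    · have he : (fun n : ℕ => A (n+1) / A n)
          = fun n : ℕ => (A₀ + ((n:ℝ)+1)*((β:ℝ)*B₀)) / (A₀ + (n:ℝ)*((β:ℝ)*B₀)) := by
        funext n
        rw [(hform (n+1)).1, (hform n).1]
        push_cast
        ring_nf
      rw [he]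
      exact ratio_arith A₀ _ hA₀pos (by positivity)
    · have he : (fun n : ℕ => B (n+1) / B n)
          = fun n : ℕ => (B₀ + ((n:ℝ)+1)*((γ:ℝ)*A₀)) / (B₀ + (n:ℝ)*((γ:ℝ)*A₀)) := by
        funext n
        rw [(hform (n+1)).2, (hform n).2]
        push_cast
        ring_nf
      rw [he]
      exact ratio_arith B₀ _ hB₀pos (by positivity)
  · -- main case: β*γ ≥ 1
    have hβ1 : 1 ≤ β := Nat.pos_of_ne_zero (fun h => by simp [h] at hbg)
    have hγ1 : 1 ≤ γ := Nat.pos_of_ne_zero (fun h => by simp [h] at hbg)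
    have hα1 : 1 ≤ α := by
      rcases Nat.eq_zero_or_pos α with h|h
      · simp [h] at hnat; omega
      · exact h
    have hδ1 : 1 ≤ δ := by
      rcases Nat.eq_zero_or_pos δ with h|h
      · simp [h] at hnat; omega
      · exact h
    have hα1R : (1:ℝ) ≤ α := by exact_mod_cast hα1
    have hβ1R : (1:ℝ) ≤ β := by exact_mod_cast hβ1
    have hγ1R : (1:ℝ) ≤ γ := by exact_mod_cast hγ1
    have hδ1R : (1:ℝ) ≤ δ := by exact_mod_cast hδ1
    have hβγ1R : (1:ℝ) ≤ (β:ℝ)*γ := by nlinarith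
    have hpos : ∀ n, 1 ≤ A n ∧ 1 ≤ B n := by
      intro n
      induction n with
      | zero => rw [hA0, hB0]; exact ⟨hA₀, hB₀⟩
      | succ n ih =>
        have hAn0 : (0:ℝ) ≤ A n := by linarith [ih.1]
        have hBn0 : (0:ℝ) ≤ B n := by linarith [ih.2]
        constructor
        · rw [hA n]
          have h1 : (1:ℝ)*1 ≤ (α:ℝ) * A n := mul_le_mul hα1R ih.1 one_pos.le (by linarith)
          have h2 : (0:ℝ) ≤ (β:ℝ) * B n := mul_nonneg (by linarith) hBn0
          linarith
        · rw [hB n]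
          have h1 : (1:ℝ)*1 ≤ (δ:ℝ) * B n := mul_le_mul hδ1R ih.2 one_pos.le (by linarith)
          have h2 : (0:ℝ) ≤ (γ:ℝ) * A n := mul_nonneg (by linarith) hAn0
          linarith
    have ht2 : 2 ≤ t := by rw [ht]; linarith
    have hD : 0 < t^2 - 4 := by
      rw [ht]
      nlinarith [sq_nonneg ((α:ℝ) - δ)]
    obtain ⟨s, hs_def⟩ : ∃ s, s = Real.sqrt (t^2-4) := ⟨_, rfl⟩
    rw [← hs_def] at hφ
    have hs2 : s^2 = t^2 - 4 := by rw [hs_def]; exact Real.sq_sqrt hD.le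
    have hspos : 0 < s := by rw [hs_def]; exact Real.sqrt_pos.2 hD
    obtain ⟨ψ, hψ_def⟩ : ∃ x, x = (t - s)/2 := ⟨_, rfl⟩
    have hφψ : φ * ψ = 1 := by
      rw [hφ, hψ_def]
      linear_combination (-(1:ℝ)/4) * hs2
    have hφgt1 : 1 < φ := by rw [hφ]; linarith
    have hφpos : 0 < φ := lt_trans one_pos hφgt1
    have hψinv : ψ = φ⁻¹ := eq_inv_of_mul_eq_one_right hφψ
    have hψpos : 0 < ψ := by rw [hψinv]; exact inv_pos.2 hφpos
    have hψlt1 : ψ < 1 := by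
      rw [hψinv]
      exact inv_lt_one_of_one_lt₀ hφgt1
    have hψφ : ψ < φ := by linarith
    have hφ2 : φ^2 = t*φ - 1 := by
      rw [hφ]; linear_combination ((1:ℝ)/4) * hs2
    have hψ2 : ψ^2 = t*ψ - 1 := by
      rw [hψ_def]
      linear_combination ((1:ℝ)/4) * hs2
    have hsub : φ - ψ ≠ 0 := by
      have : φ - ψ = s := by rw [hφ, hψ_def]; ring
      rw [this]; exact hspos.ne'
    -- closed form for any sequence satisfying the two-term recurrence
    have key : ∀ a : ℕ → ℝ, (∀ n, a (n+1+1) = t * a (n+1) - a n) →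
        ∀ n, a n = ((a 1 - ψ * a 0)/(φ - ψ)) * φ^n + ((φ * a 0 - a 1)/(φ - ψ)) * ψ^n := by
      intro a ha
      set P := (a 1 - ψ * a 0)/(φ - ψ) with hP_def
      set Q := (φ * a 0 - a 1)/(φ - ψ) with hQ_def
      have H : ∀ n, a n = P * φ^n + Q * ψ^n ∧ a (n+1) = P * φ^(n+1) + Q * ψ^(n+1) := by
        intro n
        induction n with
        | zero =>
          constructor
          · rw [hP_def, hQ_def]; field_simp; ring
          · rw [hP_def, hQ_def]; field_simp; ring
        | succ n ih =>
          refine ⟨ih.2, ?_⟩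
          rw [ha n, ih.1, ih.2]
          linear_combination (-(P*φ^n)) * hφ2 + (-(Q*ψ^n)) * hψ2
      exact fun n => (H n).1
    have hArec : ∀ n, A (n+1+1) = t * A (n+1) - A n := by
      intro n
      linear_combination hA (n+1) + (β:ℝ) * hB n - (δ:ℝ) * hA n - A (n+1) * ht - A n * hdetR
    have hBrec : ∀ n, B (n+1+1) = t * B (n+1) - B n := by
      intro n
      linear_combination hB (n+1) + (γ:ℝ) * hA n - (α:ℝ) * hB n - B (n+1) * ht - B n * hdetR
    have hAne : ∀ n, A n ≠ 0 := fun n => by have := (hpos n).1; linarith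
    have hBne : ∀ n, B n ≠ 0 := fun n => by have := (hpos n).2; linarith
    have hA1 : A 1 = α * A 0 + β * B 0 := by simpa using hA 0
    have hB1 : B 1 = γ * A 0 + δ * B 0 := by simpa using hB 0
    have hsubpos : (0:ℝ) < φ - ψ := by linarith
    have h0 := (hpos 0).1
    have h0' := (hpos 0).2
    have hPA : (A 1 - ψ * A 0)/(φ - ψ) ≠ 0 := by
      apply ne_of_gt
      apply div_pos _ hsubpos
      have e1 : A 0 ≤ (α:ℝ) * A 0 := le_mul_of_one_le_left (by linarith) hα1R
      have e2 : B 0 ≤ (β:ℝ) * B 0 := le_mul_of_one_le_left (by linarith) hβ1R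
      have e3 : ψ * A 0 < 1 * A 0 := mul_lt_mul_of_pos_right hψlt1 (by linarith)
      linarith [hA1]
    have hPB : (B 1 - ψ * B 0)/(φ - ψ) ≠ 0 := by
      apply ne_of_gt
      apply div_pos _ hsubpos
      have e1 : A 0 ≤ (γ:ℝ) * A 0 := le_mul_of_one_le_left (by linarith) hγ1R
      have e2 : B 0 ≤ (δ:ℝ) * B 0 := le_mul_of_one_le_left (by linarith) hδ1R
      have e3 : ψ * B 0 < 1 * B 0 := mul_lt_mul_of_pos_right hψlt1 (by linarith)
      linarith [hB1]
    exact ⟨binet_ratio φ ψ _ _ A hψpos hψφ hPA hAne (key A hArec),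
           binet_ratio φ ψ _ _ B hψpos hψφ hPB hBne (key B hBrec)⟩
end

section
/- Let n ≥ 2 be even and let P = [[p₁₁, p₁₂], [p₂₁, p₂₂]] be a 2×2 matrix with strictly positive real entries. Let F denote the Fibonacci sequence and let C = P · [[F (n+1), F n], [F n, F (n−1)]], with entries C = [[c₁₁, c₁₂], [c₂₁, c₂₂]]. Then F n / F (n−1) ≤ c₁₁ / c₁₂ ≤ F (n+1) / F n and F n / F (n−1) ≤ c₂₁ / c₂₂ ≤ F (n+1) / F n. -/
open Matrix

lemma cassini (m : ℕ) : (Nat.fib (m+1) : ℤ)^2 - Nat.fib m * Nat.fib (m+2) = (-1)^m := by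
  induction m with
  | zero => simp
  | succ k ih =>
    have h1 : (Nat.fib (k+2) : ℤ) = Nat.fib k + Nat.fib (k+1) := by
      push_cast [Nat.fib_add_two]; ring
    have h2 : (Nat.fib (k+3) : ℤ) = Nat.fib (k+1) + Nat.fib (k+2) := by
      push_cast [show k+3 = (k+1)+2 from rfl, Nat.fib_add_two]; ring
    have : (Nat.fib (k+2) : ℤ)^2 - Nat.fib (k+1) * Nat.fib (k+3) = -(-1)^k := by
      rw [h2, h1]; nlinarith [ih, h1]
    rw [show k+1+1 = k+2 from rfl, show k+1+2 = k+3 from rfl, this]; ring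

lemma row_bounds (n : ℕ) (hn : 2 ≤ n) (hev : Even n) (a b : ℝ) (ha : 0 < a) (hb : 0 < b) :
    (Nat.fib n : ℝ) / (Nat.fib (n - 1) : ℝ) ≤
      (a * Nat.fib (n+1) + b * Nat.fib n) / (a * Nat.fib n + b * Nat.fib (n-1)) ∧
    (a * Nat.fib (n+1) + b * Nat.fib n) / (a * Nat.fib n + b * Nat.fib (n-1)) ≤
      (Nat.fib (n + 1) : ℝ) / (Nat.fib n : ℝ) := by
  obtain ⟨m, rfl⟩ : ∃ m, n = m + 2 := ⟨n - 2, by omega⟩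
  have key : (Nat.fib (m+2) : ℝ)^2 + 1 = Nat.fib (m+1) * Nat.fib (m+3) := by
    have := cassini (m+1)
    have hodd : (-1 : ℤ)^(m+1) = -1 := by
      have : Odd (m+1) := by
        rcases hev with ⟨k, hk⟩; exact ⟨k - 1, by omega⟩
      exact Odd.neg_one_pow this
    rw [hodd] at this
    have : (Nat.fib (m+2) : ℤ)^2 + 1 = Nat.fib (m+1) * Nat.fib (m+3) := by linarith
    exact_mod_cast this
  simp only [show m + 2 - 1 = m + 1 from rfl, show m + 2 + 1 = m + 3 from rfl] at *
  have f1 : (0:ℝ) < Nat.fib (m+1) := by exact_mod_cast Nat.fib_pos.mpr (by omega)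
  have f2 : (0:ℝ) < Nat.fib (m+2) := by exact_mod_cast Nat.fib_pos.mpr (by omega)
  have f3 : (0:ℝ) < Nat.fib (m+3) := by exact_mod_cast Nat.fib_pos.mpr (by omega)
  have hden : (0:ℝ) < a * Nat.fib (m+2) + b * Nat.fib (m+1) := by positivity
  constructor
  · rw [div_le_div_iff₀ f1 hden]; nlinarith
  · rw [div_le_div_iff₀ hden f2]; nlinarith

/-- The ratio checking relations of golden cryptography: if `n ≥ 2` is even,
`P` has strictly positive entries, and `C = P · [[F (n+1), F n], [F n, F (n-1)]]`
where `F` is the Fibonacci sequence, then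
`F n / F (n-1) ≤ c₁₁ / c₁₂ ≤ F (n+1) / F n` and
`F n / F (n-1) ≤ c₂₁ / c₂₂ ≤ F (n+1) / F n`. -/
theorem stmt16 (n : ℕ) (hn : 2 ≤ n) (hev : Even n)
    (P : Matrix (Fin 2) (Fin 2) ℝ) (hP : ∀ i j, 0 < P i j)
    (C : Matrix (Fin 2) (Fin 2) ℝ)
    (hC : C = P * !![(Nat.fib (n + 1) : ℝ), (Nat.fib n : ℝ);
                     (Nat.fib n : ℝ), (Nat.fib (n - 1) : ℝ)]) :
    (Nat.fib n : ℝ) / (Nat.fib (n - 1) : ℝ) ≤ C 0 0 / C 0 1 ∧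
    C 0 0 / C 0 1 ≤ (Nat.fib (n + 1) : ℝ) / (Nat.fib n : ℝ) ∧
    (Nat.fib n : ℝ) / (Nat.fib (n - 1) : ℝ) ≤ C 1 0 / C 1 1 ∧
    C 1 0 / C 1 1 ≤ (Nat.fib (n + 1) : ℝ) / (Nat.fib n : ℝ) := by
  have h00 : C 0 0 = P 0 0 * Nat.fib (n+1) + P 0 1 * Nat.fib n := by
    simp [hC, Matrix.mul_apply, Fin.sum_univ_two]
  have h01 : C 0 1 = P 0 0 * Nat.fib n + P 0 1 * Nat.fib (n-1) := by
    simp [hC, Matrix.mul_apply, Fin.sum_univ_two]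
  have h10 : C 1 0 = P 1 0 * Nat.fib (n+1) + P 1 1 * Nat.fib n := by
    simp [hC, Matrix.mul_apply, Fin.sum_univ_two]
  have h11 : C 1 1 = P 1 0 * Nat.fib n + P 1 1 * Nat.fib (n-1) := by
    simp [hC, Matrix.mul_apply, Fin.sum_univ_two]
  rw [h00, h01, h10, h11]
  obtain ⟨l0, u0⟩ := row_bounds n hn hev (P 0 0) (P 0 1) (hP 0 0) (hP 0 1)
  obtain ⟨l1, u1⟩ := row_bounds n hn hev (P 1 0) (P 1 1) (hP 1 0) (hP 1 1)
  exact ⟨l0, u0, l1, u1⟩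
end
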